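/- Let G_ω be a weighted star graph with center x and leaves v_1,…,v_n (n ≥ 1), where the only edges are xv_1,…,xv_n, and suppose a = ω(xv_1) satisfies ω(xv_1) ≥ ω(xv_i) for all i. Then for every t ≥ 1, π_t(G_ω, x) = t·a + ∑_{i=2}^{n} (ω(xv_i) − 1). -/

import Mathlib

/-! Let every leaf `v` carry the lot size `ω(v, x)` and the centre `x` the lot size `1`. The
number of complete lots `p(x) + ∑ ⌊p(v) / ω(v, x)⌋` never increases under a pebbling move, and
emptying the leaves greedily gathers exactly that many pebbles on `x`; so `x` is `t`-reachable iff
there are at least `t` lots. Each leaf wastes at most `ω(v, x) - 1` pebbles and a lot costs at most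
`a`, so every distribution of the stated size has `t` lots, while `t·a - 1` pebbles on `v₁` and
`ω(v, x) - 1` on each other leaf give only `t - 1` lots with one pebble fewer. -/

open Finset

variable {V : Type*}

/-- Applying the pebbling move `m = (v, u)` on `G_ω`: remove `ω v u` pebbles at `v`
and add one pebble at `u`. -/
def moveFn [DecidableEq V] (ω : V → V → ℕ) (m : V × V) (p : V → ℤ) : V → ℤ :=
  fun w => if w = m.1 then p m.1 - ω m.1 m.2 else if w = m.2 then p m.2 + 1 else p w

/-- The pebble function obtained after applying a sequence of pebbling moves. -/
def applyList [DecidableEq V] (ω : V → V → ℕ) : List (V × V) → (V → ℤ) → (V → ℤ)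
  | [], p => p
  | m :: l, p => applyList ω l (moveFn ω m p)

/-- A pebbling sequence is executable from `p` if every move is along an edge of `G`
and every intermediate pebble function is nonnegative. -/
def Executable [DecidableEq V] (G : SimpleGraph V) (ω : V → V → ℕ) :
    (V → ℤ) → List (V × V) → Prop
  | _, [] => True
  | p, m :: l => G.Adj m.1 m.2 ∧ (∀ w, 0 ≤ moveFn ω m p w) ∧ Executable G ω (moveFn ω m p) l

/-- `x` is `t`-reachable from `p` on the weighted graph `G_ω`. -/
def Reaches [DecidableEq V] (G : SimpleGraph V) (ω : V → V → ℕ) (p : V → ℤ) (x : V)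
    (t : ℕ) : Prop :=
  ∃ l : List (V × V), Executable G ω p l ∧ (t : ℤ) ≤ applyList ω l p x

/-- A pebble distribution is a nonnegative pebble function. -/
def IsDistrib (p : V → ℤ) : Prop := ∀ v, 0 ≤ p v

/-- The size of a pebble distribution: the total number of pebbles. -/
def size [Fintype V] (p : V → ℤ) : ℤ := ∑ v, p v

/-- The `t`-pebbling number `π_t(G_ω, x)`: the least `m` such that `x` is `t`-reachable
from every pebble distribution of size `m`. -/
noncomputable def piT [Fintype V] [DecidableEq V] (G : SimpleGraph V) (ω : V → V → ℕ)
    (x : V) (t : ℕ) : ℕ :=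
  sInf {m : ℕ | ∀ p : V → ℤ, IsDistrib p → size p = (m : ℤ) → Reaches G ω p x t}

/-- `p_S` for a multiset `S` of pebbling moves:
`p_S(w) = p(w) + d⁻(w) − ∑ ω(w,u)` over arcs leaving `w`. -/
def applyMS [DecidableEq V] (ω : V → V → ℕ) (S : Multiset (V × V)) (p : V → ℤ) : V → ℤ :=
  fun w => p w + (Multiset.card (S.filter (fun m => m.2 = w)) : ℤ)
    - ((S.filter (fun m => m.1 = w)).map (fun m => (ω m.1 m.2 : ℤ))).sum

/-- The transition digraph of `S` contains a directed cycle. -/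
def HasCycle (S : Multiset (V × V)) : Prop :=
  ∃ l : List (V × V), l ≠ [] ∧ (l : Multiset (V × V)) ≤ S ∧
    List.Chain' (fun a b => a.2 = b.1) l ∧
    l.getLast?.map Prod.snd = l.head?.map Prod.fst

/-- A multiset of pebbling moves is acyclic if its transition digraph has no directed cycle. -/
def Acyclic (S : Multiset (V × V)) : Prop := ¬HasCycle S

/-- A list of pebbling moves is regular if each move is an initial move of the multiset of
remaining moves: the source of each move has in-degree zero among the remaining moves. -/
def RegularSeq : List (V × V) → Prop
  | [] => True
  | m :: l => (∀ m' ∈ m :: l, m'.2 ≠ m.1) ∧ RegularSeq l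

/-- The star graph with center `0` and leaves `1, …, n`. -/
def starG (n : ℕ) : SimpleGraph (Fin (n + 1)) :=
  SimpleGraph.fromRel (fun a b => a = 0 ∧ b ≠ 0)

section Moves

variable [DecidableEq V] {G : SimpleGraph V} {ω : V → V → ℕ}

@[simp]
theorem moveFn_apply_fst (m : V × V) (p : V → ℤ) :
    moveFn ω m p m.1 = p m.1 - ω m.1 m.2 := by
  simp [moveFn]

@[simp]
theorem moveFn_apply_snd {m : V × V} (hm : m.1 ≠ m.2) (p : V → ℤ) :
    moveFn ω m p m.2 = p m.2 + 1 := by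
  simp [moveFn, hm.symm]

theorem moveFn_apply_of_ne {m : V × V} {w : V} (h₁ : w ≠ m.1) (h₂ : w ≠ m.2) (p : V → ℤ) :
    moveFn ω m p w = p w := by
  simp [moveFn, h₁, h₂]

theorem moveFn_eq_add (ω : V → V → ℕ) (m : V × V) (p : V → ℤ) :
    moveFn ω m p = p + moveFn ω m 0 := by
  funext w
  simp only [moveFn, Pi.add_apply, Pi.zero_apply]
  split_ifs with h₁ h₂ <;> subst_vars <;> ring

theorem moveFn_mono (ω : V → V → ℕ) (m : V × V) : Monotone (moveFn ω m) := by
  intro p q hpq w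
  simp only [moveFn]
  split_ifs <;> linarith [hpq m.1, hpq m.2, hpq w]

@[simp]
theorem applyList_append (l₁ l₂ : List (V × V)) (p : V → ℤ) :
    applyList ω (l₁ ++ l₂) p = applyList ω l₂ (applyList ω l₁ p) := by
  induction l₁ generalizing p with
  | nil => rfl
  | cons m l ih => exact ih _

theorem applyList_replicate (k : ℕ) (m : V × V) (p : V → ℤ) :
    applyList ω (List.replicate k m) p = p + (k : ℤ) • moveFn ω m 0 := by
  induction k generalizing p with
  | zero => simp [applyList]
  | succ k ih =>
    rw [List.replicate_succ, applyList, ih, moveFn_eq_add ω m p]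
    push_cast
    module

theorem applyList_mono (l : List (V × V)) : Monotone (applyList ω l) := by
  induction l with
  | nil => exact monotone_id
  | cons m l ih => exact ih.comp (moveFn_mono ω m)

theorem Executable.append {l₁ l₂ : List (V × V)} {p : V → ℤ} (h₁ : Executable G ω p l₁)
    (h₂ : Executable G ω (applyList ω l₁ p) l₂) : Executable G ω p (l₁ ++ l₂) := by
  induction l₁ generalizing p with
  | nil => exact h₂
  | cons m l ih => exact ⟨h₁.1, h₁.2.1, ih h₁.2.2 h₂⟩

theorem Executable.mono {l : List (V × V)} {p q : V → ℤ} (h : Executable G ω p l)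
    (hpq : p ≤ q) : Executable G ω q l := by
  induction l generalizing p q with
  | nil => trivial
  | cons m l ih =>
    have hm := moveFn_mono ω m hpq
    exact ⟨h.1, fun w => (h.2.1 w).trans (hm w), ih h.2.2 hm⟩

theorem Executable.isDistrib_applyList {l : List (V × V)} {p : V → ℤ}
    (h : Executable G ω p l) (hp : IsDistrib p) : IsDistrib (applyList ω l p) := by
  induction l generalizing p with
  | nil => exact hp
  | cons m l ih => exact ih h.2.2 h.2.1

theorem Reaches.mono {p q : V → ℤ} {x : V} {t : ℕ} (h : Reaches G ω p x t) (hpq : p ≤ q) :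
    Reaches G ω q x t := by
  obtain ⟨l, hl, ht⟩ := h
  exact ⟨l, hl.mono hpq, ht.trans (applyList_mono l hpq x)⟩

theorem executable_replicate {m : V × V} (hm : G.Adj m.1 m.2) {k : ℕ} {p : V → ℤ}
    (hp : IsDistrib p) (hk : k * ω m.1 m.2 ≤ p m.1) :
    Executable G ω p (List.replicate k m) := by
  induction k generalizing p with
  | zero => trivial
  | succ k ih =>
    have hkω : (0 : ℤ) ≤ k * ω m.1 m.2 := by positivity
    push_cast at hk
    have hmove : IsDistrib (moveFn ω m p) := by
      intro w
      by_cases h₁ : w = m.1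
      · subst h₁; rw [moveFn_apply_fst]; linarith
      by_cases h₂ : w = m.2
      · subst h₂; rw [moveFn_apply_snd hm.ne]; linarith [hp m.2]
      · rw [moveFn_apply_of_ne h₁ h₂]; exact hp w
    refine ⟨hm, hmove, ih hmove ?_⟩
    rw [moveFn_apply_fst]
    linarith

/-- Greedily moving as many pebbles as possible from each neighbour in `s` to `x`. -/
theorem exists_executable_add_sum_ediv_le (x : V) (s : Finset V) (hs : ∀ i ∈ s, G.Adj i x)
    {p : V → ℤ} (hp : IsDistrib p) :
    ∃ l, Executable G ω p l ∧ p x + ∑ i ∈ s, p i / ω i x ≤ applyList ω l p x := by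
  induction s using Finset.induction_on generalizing p with
  | empty => exact ⟨[], trivial, by simp [applyList]⟩
  | insert i s hi ih =>
    have hix : G.Adj i x := hs i (mem_insert_self i s)
    set k := (p i / ω i x).toNat
    have hk : (k : ℤ) = p i / ω i x := Int.toNat_of_nonneg (Int.ediv_nonneg (hp i) (by positivity))
    have hkω : k * ω i x ≤ p i := by
      rcases eq_or_ne (ω i x : ℤ) 0 with h | h
      · simp [h, hp i]
      · rw [hk]; exact Int.ediv_mul_le _ h
    have hex := executable_replicate (m := (i, x)) hix hp hkω
    obtain ⟨l, hl, hle⟩ := ih (fun j hj => hs j (mem_insert_of_mem hj)) (hex.isDistrib_applyList hp)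
    refine ⟨_, hex.append hl, ?_⟩
    have hxs : ∀ j ∈ s, applyList ω (List.replicate k (i, x)) p j = p j := by
      intro j hj
      have hji : j ≠ i := fun h => hi (h ▸ hj)
      have hjx : j ≠ x := fun h => (hs j (mem_insert_of_mem hj)).ne h
      simp [applyList_replicate, moveFn_apply_of_ne (m := (i, x)) hji hjx]
    have hxx : applyList ω (List.replicate k (i, x)) p x = p x + k := by
      simp [applyList_replicate, moveFn_apply_snd (m := (i, x)) hix.ne]
    rw [sum_congr rfl fun j hj => by rw [hxs j hj], hxx] at hle
    rw [applyList_append, sum_insert hi]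
    linarith

end Moves

section Potential

variable [Fintype V] [DecidableEq V] {G : SimpleGraph V} {ω : V → V → ℕ}

def floorPotential (c : V → ℕ) (p : V → ℤ) : ℤ := ∑ v, p v / c v

theorem floorPotential_moveFn_le {c : V → ℕ} (hc : ∀ v, 0 < c v) {m : V × V} (hm : m.1 ≠ m.2)
    (hcω : c m.1 ≤ ω m.1 m.2) (p : V → ℤ) :
    floorPotential c (moveFn ω m p) ≤ floorPotential c p := by
  have key : ∀ v, moveFn ω m p v / c v
      ≤ p v / c v - (if v = m.1 then 1 else 0) + (if v = m.2 then 1 else 0) := by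
    intro v
    have hcv : (0 : ℤ) < c v := by exact_mod_cast hc v
    by_cases h₁ : v = m.1
    · rw [h₁, moveFn_apply_fst, if_pos rfl, if_neg hm]
      rw [h₁] at hcv
      have : (c m.1 : ℤ) ≤ ω m.1 m.2 := by exact_mod_cast hcω
      calc (p m.1 - ω m.1 m.2) / c m.1 ≤ (p m.1 + (-1) * c m.1) / c m.1 :=
            Int.ediv_le_ediv hcv (by linarith)
        _ = _ := by rw [Int.add_mul_ediv_right _ _ hcv.ne']; ring
    by_cases h₂ : v = m.2
    · rw [h₂, moveFn_apply_snd hm, if_neg hm.symm, if_pos rfl]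
      rw [h₂] at hcv
      calc (p m.2 + 1) / c m.2 ≤ (p m.2 + 1 * c m.2) / c m.2 :=
            Int.ediv_le_ediv hcv (by linarith)
        _ = _ := by rw [Int.add_mul_ediv_right _ _ hcv.ne']; ring
    · rw [moveFn_apply_of_ne h₁ h₂, if_neg h₁, if_neg h₂]
      simp
  calc floorPotential c (moveFn ω m p)
      ≤ ∑ v, (p v / c v - (if v = m.1 then 1 else 0) + (if v = m.2 then 1 else 0)) :=
        sum_le_sum fun v _ => key v
    _ = floorPotential c p := by
        simp only [sum_add_distrib, sum_sub_distrib, sum_ite_eq', mem_univ, if_true]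
        unfold floorPotential
        ring

theorem floorPotential_applyList_le {c : V → ℕ} (hc : ∀ v, 0 < c v)
    (hcω : ∀ u w, G.Adj u w → c u ≤ ω u w) {l : List (V × V)} {p : V → ℤ}
    (h : Executable G ω p l) : floorPotential c (applyList ω l p) ≤ floorPotential c p := by
  induction l generalizing p with
  | nil => exact le_rfl
  | cons m l ih => exact (ih h.2.2).trans (floorPotential_moveFn_le hc h.1.ne (hcω _ _ h.1) p)

theorem le_floorPotential_of_reaches {c : V → ℕ} (hc : ∀ v, 0 < c v)
    (hcω : ∀ u w, G.Adj u w → c u ≤ ω u w) {x : V} (hx : c x = 1) {p : V → ℤ}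
    (hp : IsDistrib p) {t : ℕ} (h : Reaches G ω p x t) : (t : ℤ) ≤ floorPotential c p := by
  obtain ⟨l, hl, ht⟩ := h
  have hq := hl.isDistrib_applyList hp
  calc (t : ℤ) ≤ applyList ω l p x := ht
    _ = applyList ω l p x / c x := by rw [hx, Nat.cast_one, Int.ediv_one]
    _ ≤ floorPotential c (applyList ω l p) :=
        single_le_sum (f := fun v => applyList ω l p v / c v)
          (fun v _ => Int.ediv_nonneg (hq v) (Nat.cast_nonneg _)) (mem_univ x)
    _ ≤ floorPotential c p := floorPotential_applyList_le hc hcω hl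

end Potential

theorem IsDistrib.size_nonneg [Fintype V] {p : V → ℤ} (hp : IsDistrib p) : 0 ≤ size p :=
  sum_nonneg fun v _ => hp v

section PebblingNumber

variable [Fintype V] [DecidableEq V] {G : SimpleGraph V} {ω : V → V → ℕ}

theorem IsDistrib.exists_le_size_eq_sub_one {p : V → ℤ} (hp : IsDistrib p) (hsize : 0 < size p) :
    ∃ q ≤ p, IsDistrib q ∧ size q = size p - 1 := by
  obtain ⟨v, hv⟩ : ∃ v, 0 < p v := by
    by_contra! h
    exact hsize.not_ge (sum_nonpos fun v _ => h v)
  refine ⟨p - Pi.single v 1, ?_, ?_, ?_⟩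
  · intro w
    by_cases hw : w = v <;> simp [hw]
  · intro w
    by_cases hw : w = v
    · subst hw; simp; omega
    · simp [hw, hp w]
  · simp [size, sum_sub_distrib]

theorem piT_eq {x : V} {t M : ℕ}
    (hgood : ∀ p, IsDistrib p → size p = M → Reaches G ω p x t)
    {q : V → ℤ} (hq : IsDistrib q) (hqsize : size q + 1 = M) (hqbad : ¬Reaches G ω q x t) :
    piT G ω x t = M := by
  set P := {m : ℕ | ∀ p : V → ℤ, IsDistrib p → size p = m → Reaches G ω p x t}
  change sInf P = M
  have hMP : M ∈ P := hgood
  have hup : ∀ m ∈ P, m + 1 ∈ P := by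
    intro m hm p hp hsize
    obtain ⟨p', hle, hp', hsize'⟩ := hp.exists_le_size_eq_sub_one (by rw [hsize]; positivity)
    exact (hm p' hp' (by rw [hsize', hsize]; push_cast; ring)).mono hle
  refine le_antisymm (Nat.sInf_le hMP) (not_lt.mp fun hlt => hqbad ?_)
  have hM := hq.size_nonneg
  have : M - 1 ∈ P :=
    Nat.le_induction (Nat.sInf_mem ⟨M, hMP⟩) (fun m _ hm => hup m hm) (M - 1) (by omega)
  exact this q hq (by omega)

end PebblingNumber

theorem Finset.sum_erase_eq_add_sum_sdiff_pair {ι M : Type*} [Fintype ι] [DecidableEq ι]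
    [AddCommMonoid M] {x j : ι} (hj : j ≠ x) (f : ι → M) :
    ∑ i ∈ univ.erase x, f i = f j + ∑ i ∈ univ \ {x, j}, f i := by
  rw [← add_sum_erase _ _ (mem_erase.mpr ⟨hj, mem_univ j⟩)]
  congr 2
  ext i
  simp only [mem_erase, mem_univ, mem_sdiff, mem_insert, mem_singleton]
  tauto

/-- Writing `p = w * (p / w) + p % w` with `p % w ≤ w - 1`. -/
theorem Finset.sum_le_mul_sum_ediv_add_sum_sub_one {ι : Type*} (s : Finset ι) {p w : ι → ℤ}
    {a : ℤ} (hp : ∀ i ∈ s, 0 ≤ p i) (hw : ∀ i ∈ s, 0 < w i) (hwa : ∀ i ∈ s, w i ≤ a) :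
    ∑ i ∈ s, p i ≤ a * ∑ i ∈ s, p i / w i + ∑ i ∈ s, (w i - 1) := by
  rw [mul_sum, ← sum_add_distrib]
  refine sum_le_sum fun i hi => ?_
  have hlt := Int.lt_ediv_add_one_mul_self (p i) (hw i hi)
  have hq : 0 ≤ p i / w i := Int.ediv_nonneg (hp i hi) (hw i hi).le
  nlinarith [mul_le_mul_of_nonneg_left (hwa i hi) hq]

theorem Int.mul_sub_one_ediv_self (k : ℤ) {a : ℤ} (ha : 0 < a) : (k * a - 1) / a = k - 1 := by
  rw [show k * a - 1 = (a - 1) + (k - 1) * a by ring, Int.add_mul_ediv_right _ _ ha.ne',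
    Int.ediv_eq_zero_of_lt (by linarith) (by linarith)]
  ring

section Star

variable {n : ℕ} {ω : Fin (n + 1) → Fin (n + 1) → ℕ}

theorem starG_adj {u v : Fin (n + 1)} : (starG n).Adj u v ↔ u ≠ v ∧ (u = 0 ∨ v = 0) := by
  simp only [starG, SimpleGraph.fromRel_adj]
  constructor
  · rintro ⟨h, ⟨hu, -⟩ | ⟨hv, -⟩⟩
    exacts [⟨h, Or.inl hu⟩, ⟨h, Or.inr hv⟩]
  · rintro ⟨h, rfl | rfl⟩
    exacts [⟨h, Or.inl ⟨rfl, h.symm⟩⟩, ⟨h, Or.inr ⟨rfl, h⟩⟩]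

theorem starG_reaches_iff (hpos : ∀ u v, (starG n).Adj u v → 0 < ω u v) {p : Fin (n + 1) → ℤ}
    (hp : IsDistrib p) (t : ℕ) :
    Reaches (starG n) ω p 0 t ↔ (t : ℤ) ≤ p 0 + ∑ i ∈ univ.erase 0, p i / ω i 0 := by
  have hleaf : ∀ i ∈ univ.erase (0 : Fin (n + 1)), (starG n).Adj i 0 :=
    fun i hi => starG_adj.mpr ⟨ne_of_mem_erase hi, Or.inr rfl⟩
  constructor
  · intro h
    let c : Fin (n + 1) → ℕ := fun v => if v = 0 then 1 else ω v 0
    have hc : ∀ v, 0 < c v := by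
      intro v
      by_cases hv : v = 0
      · simp [c, hv]
      · simpa [c, hv] using hpos v 0 (hleaf v (mem_erase.mpr ⟨hv, mem_univ v⟩))
    have hcω : ∀ u w, (starG n).Adj u w → c u ≤ ω u w := by
      intro u w huw
      by_cases hu : u = 0
      · simp only [c, if_pos hu]
        exact hpos u w huw
      · obtain rfl : w = 0 := (starG_adj.mp huw).2.resolve_left hu
        simp [c, hu]
    have hΦ : floorPotential c p = p 0 + ∑ i ∈ univ.erase 0, p i / ω i 0 := by
      rw [floorPotential, ← add_sum_erase _ _ (mem_univ 0)]
      refine congrArg₂ _ (by simp [c]) (sum_congr rfl fun i hi => ?_)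
      simp [c, ne_of_mem_erase hi]
    exact hΦ ▸ le_floorPotential_of_reaches hc hcω (by simp [c]) hp h
  · intro ht
    obtain ⟨l, hl, hle⟩ := exists_executable_add_sum_ediv_le 0 _ hleaf hp (ω := ω)
    exact ⟨l, hl, ht.trans hle⟩

theorem starG_reaches_of_le_size {j : Fin (n + 1)} (hj : j ≠ 0)
    (hpos : ∀ u v, (starG n).Adj u v → 0 < ω u v) (hmax : ∀ i ≠ 0, ω i 0 ≤ ω j 0) {t : ℕ}
    {p : Fin (n + 1) → ℤ} (hp : IsDistrib p)
    (hsize : t * ω j 0 + ∑ i ∈ univ \ {0, j}, ((ω i 0 : ℤ) - 1) ≤ size p) :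
    Reaches (starG n) ω p 0 t := by
  rw [starG_reaches_iff hpos hp]
  have hleaves := sum_le_mul_sum_ediv_add_sum_sub_one (univ.erase 0) (p := p)
    (w := fun i => (ω i 0 : ℤ)) (a := ω j 0) (fun i _ => hp i)
    (fun i hi => by exact_mod_cast hpos i 0 (starG_adj.mpr ⟨ne_of_mem_erase hi, Or.inr rfl⟩))
    (fun i hi => by exact_mod_cast hmax i (ne_of_mem_erase hi))
  rw [sum_erase_eq_add_sum_sdiff_pair hj (fun i => (ω i 0 : ℤ) - 1)] at hleaves
  rw [size, ← add_sum_erase _ _ (mem_univ 0)] at hsize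
  have hF : 0 ≤ ∑ i ∈ univ.erase 0, p i / ω i 0 :=
    sum_nonneg fun i _ => Int.ediv_nonneg (hp i) (Nat.cast_nonneg _)
  have ha : (1 : ℤ) ≤ ω j 0 := by exact_mod_cast hpos j 0 (starG_adj.mpr ⟨hj, Or.inr rfl⟩)
  by_contra! hlt
  nlinarith [hp 0]

theorem exists_distrib_not_reaches_starG {j : Fin (n + 1)} (hj : j ≠ 0)
    (hpos : ∀ u v, (starG n).Adj u v → 0 < ω u v) {t : ℕ} (ht : 1 ≤ t) :
    ∃ q, IsDistrib q ∧ size q + 1 = t * ω j 0 + ∑ i ∈ univ \ {0, j}, ((ω i 0 : ℤ) - 1) ∧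
      ¬Reaches (starG n) ω q 0 t := by
  have hω : ∀ i ≠ 0, (0 : ℤ) < ω i 0 := fun i hi => by
    exact_mod_cast hpos i 0 (starG_adj.mpr ⟨hi, Or.inr rfl⟩)
  set q : Fin (n + 1) → ℤ := fun i =>
    if i = 0 then 0 else if i = j then t * ω j 0 - 1 else ω i 0 - 1 with hq_def
  have hq : IsDistrib q := by
    intro i
    simp only [hq_def]
    split_ifs with h0
    · exact le_rfl
    · nlinarith [hω j hj]
    · linarith [hω i h0]
  have hsdiff : ∀ i ∈ univ \ {0, j}, q i = ω i 0 - 1 := fun i hi => by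
    simp only [mem_sdiff, mem_insert, mem_singleton, not_or] at hi
    simp [hq_def, hi.2.1, hi.2.2]
  refine ⟨q, hq, ?_, ?_⟩
  · rw [size, ← add_sum_erase _ _ (mem_univ 0), sum_erase_eq_add_sum_sdiff_pair hj,
      sum_congr rfl hsdiff]
    simp [hq_def, hj]
    ring
  · have hlots : ∀ i ∈ univ \ {0, j}, q i / ω i 0 = 0 := fun i hi => by
      rw [hsdiff i hi]
      simpa using Int.mul_sub_one_ediv_self 1 (hω i (by simp_all))
    rw [starG_reaches_iff hpos hq, sum_erase_eq_add_sum_sdiff_pair hj, sum_eq_zero hlots, not_le]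
    simp [hq_def, hj, Int.mul_sub_one_ediv_self _ (hω j hj)]

end Star

/-- For a weighted star with center `x = 0` and leaves `v_i = i`
(`1 ≤ i ≤ n`), where the weight `a = ω(x v_1)` is maximal among the spike weights:
`π_t(G_ω, x) = t·a + ∑_{i=2}^{n} (ω(x v_i) − 1)` for all `t ≥ 1`. -/
theorem statement6 (n : ℕ) (hn : 1 ≤ n)
    (ω : Fin (n + 1) → Fin (n + 1) → ℕ)
    (hsym : ∀ u v, ω u v = ω v u)
    (hω : ∀ u v, (starG n).Adj u v → 2 ≤ ω u v)
    (hmax : ∀ i : Fin (n + 1), i ≠ 0 → ω 0 i ≤ ω 0 1) :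
    ∀ t : ℕ, 1 ≤ t →
      piT (starG n) ω 0 t
        = t * ω 0 1 + ∑ i ∈ (Finset.univ : Finset (Fin (n + 1))) \ {0, 1}, (ω 0 i - 1) := by
  intro t ht
  have h10 : (1 : Fin (n + 1)) ≠ 0 := by
    have : NeZero n := ⟨by omega⟩
    rw [Ne, Fin.one_eq_zero_iff]
    omega
  have hpos : ∀ u v, (starG n).Adj u v → 0 < ω u v := fun u v h => by linarith [hω u v h]
  have hM : ((t * ω 0 1 + ∑ i ∈ (univ : Finset (Fin (n + 1))) \ {0, 1}, (ω 0 i - 1) : ℕ) : ℤ)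
      = t * ω 1 0 + ∑ i ∈ univ \ {0, 1}, ((ω i 0 : ℤ) - 1) := by
    push_cast
    refine congrArg₂ _ (by rw [hsym]) (sum_congr rfl fun i hi => ?_)
    have hi0 : i ≠ 0 := by simp_all
    rw [hsym, Nat.cast_pred (hpos i 0 (starG_adj.mpr ⟨hi0, Or.inr rfl⟩))]
  obtain ⟨q, hq, hqsize, hqbad⟩ := exists_distrib_not_reaches_starG h10 hpos ht
  refine piT_eq (fun p hp hsize => ?_) hq (hqsize.trans hM.symm) hqbad
  exact starG_reaches_of_le_size h10 hpos
    (fun i hi => by rw [← hsym 0 i, ← hsym 0 1]; exact hmax i hi) hp (hsize.trans hM).ge
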